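/- (Cohn) Over a field $F$, the matrix $M = \begin{pmatrix}1+st & t^2\\ -s^2 & 1-st\end{pmatrix} \in SL_2(F[s,t])$ is not a product of elementary matrices, i.e., $M \notin E_2(F[s,t])$. -/

import Mathlib

/-- The subgroup (here: submonoid, which is closed under inverses since
`E₁₂(a)⁻¹ = E₁₂(-a)` and `E₂₁(a)⁻¹ = E₂₁(-a)`) of `2 × 2` matrices generated by the
elementary matrices. -/
def E2 (R : Type*) [CommRing R] : Submonoid (Matrix (Fin 2) (Fin 2) R) :=
  Submonoid.closure {M | ∃ a : R, M = !![1, a; 0, 1] ∨ M = !![1, 0; a, 1]}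

namespace Cohn

open MvPolynomial Matrix

variable {F : Type*} [Field F]

local notation "Rp" => MvPolynomial (Fin 2) F
local notation "Mat" => Matrix (Fin 2) (Fin 2) (MvPolynomial (Fin 2) F)

/-- constant polynomials -/
def IsConst (a : Rp) : Prop := ∃ c : F, a = C c

lemma isConst_of_totalDegree_zero {a : Rp} (h : a.totalDegree = 0) : IsConst a := by
  refine ⟨coeff 0 a, ?_⟩
  have h2 : homogeneousComponent 0 a = a := by
    have h3 := sum_homogeneousComponent a
    rwa [h, Finset.range_one, Finset.sum_singleton] at h3
  conv_lhs => rw [← h2]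
  exact homogeneousComponent_zero a

lemma one_le_totalDegree_of_not_isConst {a : Rp} (h : ¬ IsConst a) : 1 ≤ a.totalDegree := by
  rcases Nat.eq_zero_or_pos a.totalDegree with h0 | h0
  · exact absurd (isConst_of_totalDegree_zero h0) h
  · exact h0

lemma ne_zero_of_not_isConst {a : Rp} (h : ¬ IsConst a) : a ≠ 0 := by
  rintro rfl; exact h ⟨0, by simp⟩

lemma le_totalDegree_of_hc_ne_zero {n : ℕ} {p : Rp}
    (h : homogeneousComponent n p ≠ 0) : n ≤ p.totalDegree := by
  by_contra hn
  exact h (homogeneousComponent_eq_zero (n := n) p (by omega))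

lemma leading_ne_zero {p : Rp} (hp : p ≠ 0) :
    homogeneousComponent p.totalDegree p ≠ 0 := by
  obtain ⟨d, hd, hdeg⟩ := Finset.exists_mem_eq_sup p.support
    (Finset.nonempty_iff_ne_empty.2 (by rwa [Ne, MvPolynomial.support_eq_empty])) (fun s => s.sum fun _ e => e)
  intro h0
  have hc := coeff_homogeneousComponent (σ := Fin 2) (R := F) p.totalDegree p d
  rw [h0] at hc
  have hT : p.totalDegree = d.sum fun _ e => e := hdeg
  have hdd : d.degree = p.totalDegree := by
    rw [hT]; simp [Finsupp.degree_apply, Finsupp.sum]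
  rw [if_pos hdd] at hc
  exact (mem_support_iff.1 hd) hc.symm

lemma totalDegree_sub_hc_lt {p : Rp} {m : ℕ} (hp : p.totalDegree ≤ m)
    (hne : p - homogeneousComponent m p ≠ 0) :
    (p - homogeneousComponent m p).totalDegree < m := by
  rcases Nat.eq_zero_or_pos m with rfl | hm
  · exfalso
    obtain ⟨c, rfl⟩ := isConst_of_totalDegree_zero (Nat.le_zero.1 hp)
    apply hne
    rw [homogeneousComponent_zero]
    simp
  · rw [totalDegree, Finset.sup_lt_iff (by exact_mod_cast hm)]
    intro d hd
    have hcoeff : coeff d (p - homogeneousComponent m p) ≠ 0 := mem_support_iff.1 hd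
    rw [coeff_sub, coeff_homogeneousComponent] at hcoeff
    by_cases hdm : d.degree = m
    · simp [hdm] at hcoeff
    · rw [if_neg hdm, sub_zero] at hcoeff
      have : (d.sum fun _ e => e) ≤ p.totalDegree := le_totalDegree (mem_support_iff.2 hcoeff)
      have hds : (d.sum fun _ e => e) = d.degree := by simp [Finsupp.degree_apply, Finsupp.sum]
      omega

lemma hc_mul {p q : Rp} {m n : ℕ} (hp : p.totalDegree ≤ m) (hq : q.totalDegree ≤ n) :
    homogeneousComponent (m + n) (p * q) =
      homogeneousComponent m p * homogeneousComponent n q := by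
  set P := homogeneousComponent m p with hP
  set Q := homogeneousComponent n q with hQ
  have hPd : P.totalDegree ≤ m := (homogeneousComponent_isHomogeneous m p).totalDegree_le
  have hQd : Q.totalDegree ≤ n := (homogeneousComponent_isHomogeneous n q).totalDegree_le
  have key : p * q = P * Q + ((p - P) * q + P * (q - Q)) := by ring
  rw [key, map_add, map_add]
  have h1 : homogeneousComponent (m + n) (P * Q) = P * Q := by
    have : (P * Q) ∈ homogeneousSubmodule (Fin 2) F (m + n) := by
      rw [mem_homogeneousSubmodule]
      exact (homogeneousComponent_isHomogeneous m p).mul (homogeneousComponent_isHomogeneous n q)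
    rw [homogeneousComponent_of_mem this, if_pos rfl]
  have h2 : homogeneousComponent (m + n) ((p - P) * q) = 0 := by
    by_cases h : p - P = 0
    · rw [h, zero_mul, map_zero]
    · apply homogeneousComponent_eq_zero
      calc ((p - P) * q).totalDegree ≤ (p - P).totalDegree + q.totalDegree :=
            totalDegree_mul _ _
        _ < m + n := by
            have h5 : (p - P).totalDegree < m := by
              rw [hP]; exact totalDegree_sub_hc_lt hp h
            omega
  have h3 : homogeneousComponent (m + n) (P * (q - Q)) = 0 := by
    by_cases h : q - Q = 0
    · rw [h, mul_zero, map_zero]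
    · apply homogeneousComponent_eq_zero
      calc (P * (q - Q)).totalDegree ≤ P.totalDegree + (q - Q).totalDegree :=
            totalDegree_mul _ _
        _ < m + n := by
            have h5 : (q - Q).totalDegree < n := by
              rw [hQ]; exact totalDegree_sub_hc_lt hq h
            omega
  rw [h1, h2, h3, add_zero, add_zero]

noncomputable def U (a : Rp) : Mat := !![1, a; 0, 1]

def ConstSL (A : Mat) : Prop := (∀ i j, IsConst (A i j)) ∧ A.det = 1

lemma constSL_one : ConstSL (1 : Mat) := by
  constructor
  · intro i j
    fin_cases i <;> fin_cases j <;>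
      simp [Matrix.one_apply, IsConst] <;> [exact ⟨1, by simp⟩; exact ⟨0, by simp⟩;
        exact ⟨0, by simp⟩; exact ⟨1, by simp⟩]
  · simp

lemma constSL_mul {A B : Mat} (hA : ConstSL A) (hB : ConstSL B) : ConstSL (A * B) := by
  constructor
  · intro i j
    rw [Matrix.mul_apply, Fin.sum_univ_two]
    obtain ⟨a0, h0⟩ := hA.1 i 0
    obtain ⟨a1, h1⟩ := hA.1 i 1
    obtain ⟨b0, hb0⟩ := hB.1 0 j
    obtain ⟨b1, hb1⟩ := hB.1 1 j
    exact ⟨a0 * b0 + a1 * b1, by rw [h0, h1, hb0, hb1]; simp⟩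
  · rw [Matrix.det_mul, hA.2, hB.2, one_mul]

lemma constSL_adjugate {A : Mat} (hA : ConstSL A) : ConstSL (adjugate A) := by
  constructor
  · intro i j
    rw [Matrix.eta_fin_two A, Matrix.adjugate_fin_two]
    obtain ⟨a, ha⟩ := hA.1 0 0
    obtain ⟨b, hb⟩ := hA.1 0 1
    obtain ⟨c, hc⟩ := hA.1 1 0
    obtain ⟨d, hd⟩ := hA.1 1 1
    fin_cases i <;> fin_cases j <;> simp [ha, hb, hc, hd]
    exacts [⟨d, rfl⟩, ⟨-b, by simp⟩, ⟨-c, by simp⟩, ⟨a, rfl⟩]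
  · rw [Matrix.det_adjugate, hA.2, one_pow]

lemma mul_adjugate_cancel {A B : Mat} (hA : ConstSL A) : B * A * adjugate A = B := by
  rw [mul_assoc, Matrix.mul_adjugate, hA.2, one_smul, mul_one]

lemma constSL_U_of_const {a : Rp} (h : IsConst a) : ConstSL (U a) := by
  obtain ⟨c, rfl⟩ := h
  constructor
  · intro i j
    fin_cases i <;> fin_cases j <;> simp [U]
    exacts [⟨1, by simp⟩, ⟨c, rfl⟩, ⟨0, by simp⟩, ⟨1, by simp⟩]
  · simp [U, Matrix.det_fin_two]

/-- staircase matrices: words `K₀ U(a₁) K₁ U(a₂) ⋯ Kₙ₋₁ U(aₙ)` with nonconstant `aᵢ`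
and all the intermediate constant matrices not upper triangular. -/
inductive Stair : Mat → Prop
  | base (K : Mat) (a : Rp) (hK : ConstSL K) (ha : ¬ IsConst a) : Stair (K * U a)
  | step (B K : Mat) (a : Rp) (hB : Stair B) (hK : ConstSL K) (hγ : K 1 0 ≠ 0)
      (ha : ¬ IsConst a) : Stair (B * K * U a)

def Stair' (A : Mat) : Prop := ConstSL A ∨ ∃ C, ConstSL C ∧ Stair (A * C)

lemma stair_mul_constSL {B K : Mat} (hB : Stair B) (hK : ConstSL K) : Stair' (B * K) :=
  Or.inr ⟨adjugate K, constSL_adjugate hK, by rwa [mul_adjugate_cancel hK]⟩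

lemma stair'_mul_constSL {A K : Mat} (hA : Stair' A) (hK : ConstSL K) : Stair' (A * K) := by
  rcases hA with hA | ⟨C, hC, hS⟩
  · exact Or.inl (constSL_mul hA hK)
  · refine Or.inr ⟨adjugate K * C, constSL_mul (constSL_adjugate hK) hC, ?_⟩
    have : A * K * (adjugate K * C) = A * C := by
      rw [← mul_assoc, mul_adjugate_cancel hK]
    rwa [this]

lemma stair_stair' {A : Mat} (h : Stair A) : Stair' A :=
  Or.inr ⟨1, constSL_one, by rwa [mul_one]⟩

lemma merge_id (a₀ a : Rp) (k00 k01 k11 : F) (hdet : k00 * k11 = 1) :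
    U a₀ * (!![C k00, C k01; 0, C k11] * U a)
      = !![C k00, 0; 0, C k11] * U (a + C (k11 * k01) + C (k11 * k11) * a₀) := by
  have hC : (C k00 : Rp) * C k11 = 1 := by rw [← C_mul, hdet, C_1]
  refine Matrix.ext fun i j => ?_
  fin_cases i <;> fin_cases j <;>
    simp [U, Matrix.mul_apply, Fin.sum_univ_two] <;>
    linear_combination (-(C k01 + C k11 * a₀) : Rp) * hC

lemma constSL_diag (k00 k11 : F) (hdet : k00 * k11 = 1) :
    ConstSL (!![C k00, 0; 0, C k11] : Mat) := by
  constructor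
  · intro i j
    fin_cases i <;> fin_cases j <;> simp only [Matrix.cons_val', Matrix.cons_val_zero,
      Matrix.cons_val_one, Matrix.head_cons, Matrix.head_fin_const, Matrix.empty_val',
      Matrix.cons_val_fin_one]
    exacts [⟨k00, rfl⟩, ⟨0, by simp⟩, ⟨0, by simp⟩, ⟨k11, rfl⟩]
  · rw [Matrix.det_fin_two]; simp [← C_mul, hdet]

lemma eta_constSL {K : Mat} (hK : ConstSL K) (hγ : K 1 0 = 0) :
    ∃ k00 k01 k11 : F, K = !![C k00, C k01; 0, C k11] ∧ k00 * k11 = 1 := by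
  obtain ⟨k00, h00⟩ := hK.1 0 0
  obtain ⟨k01, h01⟩ := hK.1 0 1
  obtain ⟨k11, h11⟩ := hK.1 1 1
  refine ⟨k00, k01, k11, ?_, ?_⟩
  · rw [Matrix.eta_fin_two K, h00, h01, hγ, h11]
  · have hd := hK.2
    rw [Matrix.det_fin_two, h00, h01, hγ, h11, mul_zero, sub_zero, ← C_mul] at hd
    have := hd.trans (C_1 (σ := Fin 2) (R := F)).symm
    exact C_injective (Fin 2) F this

lemma stair_append {B : Mat} (hB : Stair B) :
    ∀ (K : Mat) (a : Rp), ConstSL K → Stair' (B * K * U a) := by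
  induction hB with
  | base K₀ a₀ hK₀ ha₀ =>
    intro K a hK
    by_cases hca : IsConst a
    · have h1 : ConstSL (K * U a) := constSL_mul hK (constSL_U_of_const hca)
      have h2 : K₀ * U a₀ * K * U a = (K₀ * U a₀) * (K * U a) := by rw [mul_assoc]
      rw [h2]
      exact stair'_mul_constSL (stair_stair' (Stair.base _ _ hK₀ ha₀)) h1
    by_cases hγ : K 1 0 = 0
    · obtain ⟨k00, k01, k11, hKeta, hdet⟩ := eta_constSL hK hγ
      set a'' : Rp := a + C (k11 * k01) + C (k11 * k11) * a₀ with ha''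
      have key : K₀ * U a₀ * K * U a = (K₀ * !![C k00, 0; 0, C k11]) * U a'' := by
        rw [hKeta]
        simp only [mul_assoc]
        rw [merge_id a₀ a k00 k01 k11 hdet]
      rw [key]
      have hD : ConstSL (!![C k00, 0; 0, C k11] : Mat) := constSL_diag k00 k11 hdet
      by_cases hca'' : IsConst a''
      · exact Or.inl (constSL_mul (constSL_mul hK₀ hD) (constSL_U_of_const hca''))
      · exact stair_stair' (Stair.base _ _ (constSL_mul hK₀ hD) hca'')
    · exact stair_stair' (Stair.step _ K a (Stair.base _ _ hK₀ ha₀) hK hγ hca)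
  | step B₀ K₀ a₀ hB₀ hK₀ hγ₀ ha₀ ih =>
    intro K a hK
    by_cases hca : IsConst a
    · have h1 : ConstSL (K * U a) := constSL_mul hK (constSL_U_of_const hca)
      have h2 : B₀ * K₀ * U a₀ * K * U a = (B₀ * K₀ * U a₀) * (K * U a) := by
        rw [mul_assoc]
      rw [h2]
      exact stair'_mul_constSL (stair_stair' (Stair.step _ _ _ hB₀ hK₀ hγ₀ ha₀)) h1
    by_cases hγ : K 1 0 = 0
    · obtain ⟨k00, k01, k11, hKeta, hdet⟩ := eta_constSL hK hγ
      set a'' : Rp := a + C (k11 * k01) + C (k11 * k11) * a₀ with ha''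
      have key : B₀ * K₀ * U a₀ * K * U a = (B₀ * (K₀ * !![C k00, 0; 0, C k11])) * U a'' := by
        rw [hKeta]
        simp only [mul_assoc]
        rw [merge_id a₀ a k00 k01 k11 hdet]
      rw [key]
      exact ih (K₀ * !![C k00, 0; 0, C k11]) a'' (constSL_mul hK₀ (constSL_diag k00 k11 hdet))
    · exact stair_stair' (Stair.step _ K a (Stair.step _ _ _ hB₀ hK₀ hγ₀ ha₀) hK hγ hca)

lemma stair'_mul_U {A : Mat} (hA : Stair' A) (a : Rp) : Stair' (A * U a) := by
  rcases hA with hA | ⟨C', hC, hS⟩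
  · by_cases hca : IsConst a
    · exact Or.inl (constSL_mul hA (constSL_U_of_const hca))
    · exact stair_stair' (Stair.base A a hA hca)
  · have h := stair_append hS (adjugate C') a (constSL_adjugate hC)
    rwa [mul_adjugate_cancel hC] at h

noncomputable def Lm (a : Rp) : Mat := !![1, 0; a, 1]

lemma constSL_W : ConstSL (!![0, 1; -1, 0] : Mat) := by
  constructor
  · intro i j
    fin_cases i <;> fin_cases j <;> simp only [Matrix.cons_val', Matrix.cons_val_zero,
      Matrix.cons_val_one, Matrix.head_cons, Matrix.head_fin_const, Matrix.empty_val',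
      Matrix.cons_val_fin_one]
    exacts [⟨0, by simp⟩, ⟨1, by simp⟩, ⟨-1, by simp⟩, ⟨0, by simp⟩]
  · simp [Matrix.det_fin_two]

lemma constSL_W' : ConstSL (!![0, -1; 1, 0] : Mat) := by
  constructor
  · intro i j
    fin_cases i <;> fin_cases j <;> simp only [Matrix.cons_val', Matrix.cons_val_zero,
      Matrix.cons_val_one, Matrix.head_cons, Matrix.head_fin_const, Matrix.empty_val',
      Matrix.cons_val_fin_one]
    exacts [⟨0, by simp⟩, ⟨-1, by simp⟩, ⟨1, by simp⟩, ⟨0, by simp⟩]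
  · simp [Matrix.det_fin_two]

lemma L_eq (a : Rp) : Lm a = !![0, 1; -1, 0] * U (-a) * !![0, -1; 1, 0] := by
  refine Matrix.ext fun i j => ?_
  fin_cases i <;> fin_cases j <;> simp [Lm, U, Matrix.mul_apply, Fin.sum_univ_two]

lemma stair'_mul_L {A : Mat} (hA : Stair' A) (a : Rp) : Stair' (A * Lm a) := by
  rw [L_eq, ← mul_assoc, ← mul_assoc]
  exact stair'_mul_constSL (stair'_mul_U (stair'_mul_constSL hA constSL_W) _) constSL_W'

def Facts (A : Mat) : Prop :=
  ∃ (m M : ℕ) (g : Rp) (e : Fin 2 → Rp),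
    m < M ∧ g ≠ 0 ∧ (∃ i, e i ≠ 0) ∧
    (∀ i, (A i 0).totalDegree ≤ m) ∧
    (∀ i, homogeneousComponent m (A i 0) = e i) ∧
    (∀ i, (A i 1).totalDegree ≤ M) ∧
    (∀ i, homogeneousComponent M (A i 1) = g * e i)

lemma stair_facts {A : Mat} (hA : Stair A) : Facts A := by
  induction hA with
  | base K a hK ha =>
    have ha0 : a ≠ 0 := ne_zero_of_not_isConst ha
    have hk1 : 1 ≤ a.totalDegree := one_le_totalDegree_of_not_isConst ha
    have h00 : ∀ i, (K * U a) i 0 = K i 0 := by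
      intro i; simp [Matrix.mul_apply, Fin.sum_univ_two, U]
    have h01 : ∀ i, (K * U a) i 1 = K i 0 * a + K i 1 := by
      intro i; simp [Matrix.mul_apply, Fin.sum_univ_two, U]
    refine ⟨0, a.totalDegree, homogeneousComponent a.totalDegree a, fun i => K i 0,
      hk1, leading_ne_zero ha0, ?_, ?_, ?_, ?_, ?_⟩
    · by_contra hcon
      push_neg at hcon
      have hdet := hK.2
      rw [Matrix.det_fin_two, hcon 0, hcon 1] at hdet
      simp at hdet
    · intro i
      obtain ⟨c, hc⟩ := hK.1 i 0
      rw [h00 i, hc, totalDegree_C]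
    · intro i
      obtain ⟨c, hc⟩ := hK.1 i 0
      rw [h00 i, hc, homogeneousComponent_zero, coeff_zero_C]
      simp [hc]
    · intro i
      obtain ⟨c0, hc0⟩ := hK.1 i 0
      obtain ⟨c1, hc1⟩ := hK.1 i 1
      rw [h01 i, hc0, hc1]
      refine (totalDegree_add _ _).trans (max_le ?_ ?_)
      · exact (totalDegree_mul _ _).trans (by simp [totalDegree_C])
      · rw [totalDegree_C]; omega
    · intro i
      obtain ⟨c0, hc0⟩ := hK.1 i 0
      obtain ⟨c1, hc1⟩ := hK.1 i 1
      rw [h01 i, hc0, hc1, map_add, homogeneousComponent_C_mul,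
        homogeneousComponent_eq_zero a.totalDegree (C c1) (by rw [totalDegree_C]; omega)]
      simp [hc0]
      ring
  | step B K a hB hK hγ ha ih =>
    obtain ⟨m, M, g, e, hmM, hg0, ⟨i0, hei0⟩, hm, he, hM, hw⟩ := ih
    have ha0 : a ≠ 0 := ne_zero_of_not_isConst ha
    have hk1 : 1 ≤ a.totalDegree := one_le_totalDegree_of_not_isConst ha
    obtain ⟨c00, h00⟩ := hK.1 0 0
    obtain ⟨c01, h01⟩ := hK.1 0 1
    obtain ⟨c10, h10⟩ := hK.1 1 0
    obtain ⟨c11, h11⟩ := hK.1 1 1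
    have hc10 : c10 ≠ 0 := by
      intro h0; exact hγ (by rw [h10, h0, C_0])
    have hA0 : ∀ i, (B * K * U a) i 0 = C c00 * B i 0 + C c10 * B i 1 := by
      intro i
      simp [Matrix.mul_apply, Fin.sum_univ_two, U, h00, h10]
      ring
    have hA1 : ∀ i, (B * K * U a) i 1
        = B i 0 * (C c00 * a + C c01) + B i 1 * (C c10 * a + C c11) := by
      intro i
      simp [Matrix.mul_apply, Fin.sum_univ_two, U, h00, h01, h10, h11]
      ring
    have hin : ∀ c c' : F, ((C c : Rp) * a + C c').totalDegree ≤ a.totalDegree := by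
      intro c c'
      refine (totalDegree_add _ _).trans (max_le ?_ ?_)
      · exact (totalDegree_mul _ _).trans (by simp [totalDegree_C])
      · rw [totalDegree_C]; omega
    refine ⟨M, M + a.totalDegree, homogeneousComponent a.totalDegree a,
      fun i => C c10 * (g * e i), by omega, leading_ne_zero ha0, ⟨i0, ?_⟩, ?_, ?_, ?_, ?_⟩
    · exact mul_ne_zero (C_ne_zero.2 hc10) (mul_ne_zero hg0 hei0)
    · intro i
      rw [hA0 i]
      refine (totalDegree_add _ _).trans (max_le ?_ ?_)
      · refine (totalDegree_mul _ _).trans ?_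
        rw [totalDegree_C]
        have := hm i
        omega
      · refine (totalDegree_mul _ _).trans ?_
        rw [totalDegree_C]
        have := hM i
        omega
    · intro i
      rw [hA0 i, map_add, homogeneousComponent_C_mul, homogeneousComponent_C_mul,
        homogeneousComponent_eq_zero M (B i 0) (lt_of_le_of_lt (hm i) hmM), hw i]
      ring
    · intro i
      rw [hA1 i]
      refine (totalDegree_add _ _).trans (max_le ?_ ?_)
      · refine (totalDegree_mul _ _).trans ?_
        have h5 := hin c00 c01
        have := hm i
        omega
      · refine (totalDegree_mul _ _).trans ?_
        have h5 := hin c10 c11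
        have := hM i
        omega
    · intro i
      rw [hA1 i, map_add]
      have hz : homogeneousComponent (M + a.totalDegree) (B i 0 * (C c00 * a + C c01)) = 0 := by
        apply homogeneousComponent_eq_zero
        have h6 : (B i 0 * (C c00 * a + C c01)).totalDegree ≤ m + a.totalDegree :=
          (totalDegree_mul _ _).trans (add_le_add (hm i) (hin c00 c01))
        omega
      rw [hz, zero_add, hc_mul (hM i) (hin c10 c11), hw i, map_add,
        homogeneousComponent_C_mul,
        homogeneousComponent_eq_zero a.totalDegree (C c11) (by rw [totalDegree_C]; omega)]
      ring

lemma stair'_of_mem {A : Mat} (h : A ∈ E2 (MvPolynomial (Fin 2) F)) : Stair' A := by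
  have h' : A ∈ Submonoid.closure
      {M : Mat | ∃ a : Rp, M = !![1, a; 0, 1] ∨ M = !![1, 0; a, 1]} := h
  clear h
  induction h' using Submonoid.closure_induction_right with
  | one => exact Or.inl constSL_one
  | mul_right x hx y hy ih =>
    obtain ⟨a, rfl | rfl⟩ := hy
    · exact stair'_mul_U ih a
    · exact stair'_mul_L ih a

lemma main_aux :
    (!![1 + X 0 * X 1, (X 1 : Rp) ^ 2; -(X 0) ^ 2, 1 - X 0 * X 1] : Mat)
      ∉ E2 (MvPolynomial (Fin 2) F) := by
  intro hmem
  set Mm : Mat := !![1 + X 0 * X 1, (X 1 : Rp) ^ 2; -(X 0) ^ 2, 1 - X 0 * X 1] with hMm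
  have hMall : ∀ i j, (Mm i j).totalDegree ≤ 2 := by
    have e1 : ((1 : Rp) + X 0 * X 1).totalDegree ≤ 2 := by
      refine (totalDegree_add _ _).trans (max_le (by simp) ?_)
      exact (totalDegree_mul _ _).trans (by simp [totalDegree_X])
    have e2 : ((X 1 : Rp) ^ 2).totalDegree ≤ 2 :=
      (totalDegree_pow _ _).trans (by simp [totalDegree_X])
    have e3 : (-(X 0 : Rp) ^ 2).totalDegree ≤ 2 := by
      rw [totalDegree_neg]
      exact (totalDegree_pow _ _).trans (by simp [totalDegree_X])
    have e4 : ((1 : Rp) - X 0 * X 1).totalDegree ≤ 2 := by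
      rw [sub_eq_add_neg]
      refine (totalDegree_add _ _).trans (max_le (by simp) ?_)
      rw [totalDegree_neg]
      exact (totalDegree_mul _ _).trans (by simp [totalDegree_X])
    intro i j
    fin_cases i <;> fin_cases j <;> simpa [hMm] using (by assumption)
  have hS : Stair' Mm := stair'_of_mem hmem
  rcases hS with hC | ⟨Cm, hCm, hSt⟩
  · -- Mm constant: but entry (0,1) = X1² is not constant
    obtain ⟨c, hc⟩ := hC.1 0 1
    have h01 : Mm 0 1 = (X 1 : Rp) ^ 2 := by simp [hMm]
    rw [h01] at hc
    have hcc := congrArg (eval (fun _ => (0 : F))) hc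
    simp at hcc
    rw [← hcc, C_0] at hc
    exact pow_ne_zero 2 (X_ne_zero 1) hc
  · obtain ⟨m, M, g, e, hmM, hg0, ⟨i0, hei0⟩, hm, he, hM, hw⟩ := stair_facts hSt
    obtain ⟨c00, h00⟩ := hCm.1 0 0
    obtain ⟨c01, h01⟩ := hCm.1 0 1
    obtain ⟨c10, h10⟩ := hCm.1 1 0
    obtain ⟨c11, h11⟩ := hCm.1 1 1
    have sdet : c00 * c11 - c01 * c10 = 1 := by
      have hd := hCm.2
      rw [Matrix.det_fin_two, h00, h01, h10, h11, ← C_mul, ← C_mul, ← C_sub] at hd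
      exact C_injective (Fin 2) F (by rw [hd, C_1])
    have hA : ∀ i j, (Mm * Cm) i j = Mm i 0 * Cm 0 j + Mm i 1 * Cm 1 j := by
      intro i j; rw [Matrix.mul_apply, Fin.sum_univ_two]
    -- column 0 : the degree-2 component is nonzero
    have hM00 : Mm 0 0 = 1 + X 0 * X 1 := by simp [hMm]
    have hM01 : Mm 0 1 = (X 1 : Rp) ^ 2 := by simp [hMm]
    have hXX : homogeneousComponent 2 ((X 0 : Rp) * X 1) = X 0 * X 1 := by
      rw [homogeneousComponent_of_mem ((mem_homogeneousSubmodule _ _).2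
        (((isHomogeneous_X F 0).mul (isHomogeneous_X F 1)) : IsHomogeneous _ 2))]
      simp
    have hX2 : homogeneousComponent 2 ((X 1 : Rp) ^ 2) = (X 1 : Rp) ^ 2 := by
      rw [homogeneousComponent_of_mem ((mem_homogeneousSubmodule _ _).2
        (isHomogeneous_X_pow 1 2))]
      simp
    have key : homogeneousComponent 2 ((Mm * Cm) 0 0)
        = C c00 * (X 0 * X 1) + C c10 * ((X 1 : Rp) ^ 2) := by
      rw [hA 0 0, hM00, hM01, h00, h10, mul_comm _ (C c00), mul_comm _ (C c10), map_add,
        homogeneousComponent_C_mul, homogeneousComponent_C_mul, map_add,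
        homogeneousComponent_eq_zero 2 (1 : Rp) (by rw [totalDegree_one]; omega),
        hXX, hX2, zero_add]
    have hkey0 : homogeneousComponent 2 ((Mm * Cm) 0 0) ≠ 0 := by
      rw [key]
      intro h0
      have hv1 := congrArg (eval (fun i : Fin 2 => if i = 0 then (0 : F) else 1)) h0
      simp [eval_X, eval_C] at hv1
      have hv2 := congrArg (eval (fun _ : Fin 2 => (1 : F))) h0
      simp [eval_X, eval_C, hv1] at hv2
      rw [hv1, hv2] at sdet
      simp at sdet
    have h2m : 2 ≤ m := le_trans (le_totalDegree_of_hc_ne_zero hkey0) (hm 0)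
    -- column 1 : degree-M component is nonzero, hence M ≤ 2
    have hMle : M ≤ 2 := by
      have hne : homogeneousComponent M ((Mm * Cm) i0 1) ≠ 0 := by
        rw [hw i0]; exact mul_ne_zero hg0 hei0
      refine le_trans (le_totalDegree_of_hc_ne_zero hne) ?_
      rw [hA i0 1, h01, h11]
      refine (totalDegree_add _ _).trans (max_le ?_ ?_) <;>
        refine (totalDegree_mul _ _).trans ?_
      · have := hMall i0 0
        rw [totalDegree_C]
        omega
      · have := hMall i0 1
        rw [totalDegree_C]
        omega
    omega

end Cohn

/-- Cohn: `M = !![1+st, t²; -s², 1-st]` is not a product of elementary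
matrices over `F[s,t]`. -/
theorem stmt14 (F : Type*) [Field F] :
    (!![1 + MvPolynomial.X 0 * MvPolynomial.X 1, (MvPolynomial.X 1) ^ 2;
        -(MvPolynomial.X 0) ^ 2, 1 - MvPolynomial.X 0 * MvPolynomial.X 1] :
      Matrix (Fin 2) (Fin 2) (MvPolynomial (Fin 2) F)) ∉ E2 (MvPolynomial (Fin 2) F) := by
  exact Cohn.main_aux
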